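/- Let E be an elliptic curve over a finite field k, let N be square-free with prime divisors P(N), let G_r = ker τ_{r/1}, X_N = ∪_{r∈P(N)} G_r, D_N = (X_N), and D_r = (G_r), and fix P = 0 ∈ X_N. Then L_0(D_N) = ⊕_{r ∈ P(N)} L_0(D_r), and dim L_0(D_N) = Σ_{r∈P(N)} (|(α)_r|^2 − 1), where α is the Frobenius eigenvalue. -/

import Mathlib

open scoped Classical

noncomputable def setDiv {pt : Type} (Z : Finset pt) : pt →₀ ℤ :=
  ∑ z ∈ Z, Finsupp.single z 1

/-!
A point killed by `τ_{r/1} = 1 + F + ⋯ + F^(r-1)` is fixed by `F^r`, since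
`(F - 1) τ_{r/1} = F^r - 1`. For distinct primes `r, s` a point of `G_r ∩ G_s` is therefore fixed
by `F` itself, so it is killed by both `r` and `s`, and is `0`: the `G_r` meet only in `0`.
Since `L((Y)) ∩ L((Z)) ⊆ L((Y ∩ Z))`, a function in `L_0(D_r)` and in the sum of the `L_0(D_s)`,
`s ≠ r`, lies in `L((0))`, the constants, and vanishes at `0`; this gives independence.
Riemann–Roch gives `dim L_0((Z)) = |Z| - 1`, and `|X_N| - 1 = Σ_r (|G_r| - 1)`, so the
independent sum fills `L_0(D_N)`.
-/

open Finset Module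

theorem AddMonoid.End.eq_zero_of_geom_sum_apply_eq_zero_of_coprime {A : Type*} [AddCommGroup A]
    (F : AddMonoid.End A) {r s : ℕ} (hrs : r.Coprime s) {x : A}
    (hr : (∑ i ∈ range r, F ^ i) x = 0) (hs : (∑ i ∈ range s, F ^ i) x = 0) : x = 0 := by
  have periodic : ∀ n, (∑ i ∈ range n, F ^ i) x = 0 → Function.IsPeriodicPt F n x := by
    intro n hn
    have h : (F ^ n) x - x = (F - 1) ((∑ i ∈ range n, F ^ i) x) := by
      change (F ^ n - 1 : AddMonoid.End A) x = ((F - 1) * ∑ i ∈ range n, F ^ i) x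
      rw [mul_geom_sum]
    rwa [hn, map_zero, sub_eq_zero] at h
  have hfix : F x = x := by simpa [hrs] using ((periodic r hr).gcd (periodic s hs)).eq
  have hpow : ∀ i, (F ^ i) x = x := Function.iterate_fixed hfix
  have hsum : ∀ n, (∑ i ∈ range n, F ^ i) x = n • x := fun n => by
    rw [show (∑ i ∈ range n, F ^ i) x = ∑ i ∈ range n, (F ^ i) x from
      AddMonoidHom.finsetSum_apply _ _ x]
    simp [hpow]
  rw [hsum] at hr hs
  exact AddMonoid.addOrderOf_eq_one_iff.1 <| Nat.eq_one_of_dvd_coprimes hrs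
    (addOrderOf_dvd_of_nsmul_eq_zero hr) (addOrderOf_dvd_of_nsmul_eq_zero hs)

theorem iSupIndep.finrank_iSup {K V ι : Type*} [DivisionRing K] [AddCommGroup V] [Module K V]
    [Fintype ι] [FiniteDimensional K V] {p : ι → Submodule K V} (hp : iSupIndep p) :
    finrank K ↥(⨆ i, p i) = ∑ i, finrank K (p i) := by
  rw [Submodule.iSup_eq_range_dfinsupp_lsum,
    LinearMap.finrank_range_of_inj hp.dfinsupp_lsum_injective]
  exact Module.finrank_directSum K fun i => p i

theorem Submodule.finrank_one (k K : Type*) [Field k] [Ring K] [Nontrivial K] [Algebra k K] :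
    finrank k (1 : Submodule k K) = 1 := by
  rw [← Algebra.toSubmodule_bot]; exact Subalgebra.finrank_bot

theorem card_biUnion_sub_one {ι α : Type*} (P : Finset ι) (G : ι → Finset α) (p : α)
    (hp : ∀ r ∈ P, p ∈ G r) (hpair : (P : Set ι).Pairwise fun r s => G r ∩ G s ⊆ {p}) :
    #(P.biUnion G) - 1 = ∑ r ∈ P, (#(G r) - 1) := by
  rcases P.eq_empty_or_nonempty with rfl | ⟨r, hr⟩
  · simp
  have hdisj : (P : Set ι).PairwiseDisjoint fun r => (G r).erase p :=
    fun r hr s hs hrs => disjoint_left.2 fun a har has => (mem_erase.1 har).1 <|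
      mem_singleton.1 <| hpair hr hs hrs <| mem_inter.2 ⟨mem_of_mem_erase har, mem_of_mem_erase has⟩
  rw [← card_erase_of_mem (mem_biUnion.2 ⟨r, hr, hp r hr⟩), erase_biUnion, card_biUnion hdisj]
  exact sum_congr rfl fun r hr => card_erase_of_mem (hp r hr)

section setDiv

variable {pt : Type}

theorem setDiv_apply (Z : Finset pt) (a : pt) : setDiv Z a = if a ∈ Z then 1 else 0 := by
  simp [setDiv, Finsupp.finsetSum_apply, Finsupp.single_apply]

theorem setDiv_empty : setDiv (∅ : Finset pt) = 0 := by
  simp [setDiv]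

theorem setDiv_nonneg (Z : Finset pt) : 0 ≤ setDiv Z :=
  sum_nonneg fun _ _ => Finsupp.single_nonneg.2 zero_le_one

theorem setDiv_mono {Y Z : Finset pt} (h : Y ⊆ Z) : setDiv Y ≤ setDiv Z :=
  sum_le_sum_of_subset_of_nonneg h fun _ _ _ => Finsupp.single_nonneg.2 zero_le_one

theorem setDiv_inter (Y Z : Finset pt) : setDiv (Y ∩ Z) = setDiv Y ⊓ setDiv Z := by
  ext a; simp only [Finsupp.inf_apply, setDiv_apply, mem_inter]; split_ifs <;> simp_all

theorem sum_setDiv (Z : Finset pt) : ((setDiv Z).sum fun _ n => n) = #Z := by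
  rw [setDiv, ← Finsupp.sum_finsetSum_index (fun _ => rfl) (fun _ _ _ => rfl)]
  simp

end setDiv

section Evaluation

variable {k K : Type} [Field k] [Field K] [Algebra k K] {W : Submodule k K} (ev : W →ₗ[k] k)

theorem ker_inf_comap_one_eq_bot
    (hev : ∀ (f : W) (c : k), (f : K) = algebraMap k K c → ev f = c) :
    LinearMap.ker ev ⊓ (1 : Submodule k K).comap W.subtype = ⊥ := by
  refine eq_bot_iff.2 fun f ⟨hf0, hf1⟩ => ?_
  obtain ⟨c, hc⟩ := Submodule.mem_one.1 hf1
  have hc0 : c = 0 := (hev f c hc.symm).symm.trans hf0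
  exact (Submodule.mem_bot k).2 <| Subtype.ext <| hc.symm.trans (by rw [hc0, map_zero]; rfl)

theorem finrank_ker_inf_comap_add_one [FiniteDimensional k W]
    (hev : ∀ (f : W) (c : k), (f : K) = algebraMap k K c → ev f = c)
    {V : Submodule k K} (h1V : 1 ≤ V) (hVW : V ≤ W) :
    finrank k ↥(LinearMap.ker ev ⊓ V.comap W.subtype) + 1 = finrank k V := by
  set U := V.comap W.subtype
  have hsurj : Function.Surjective (ev.domRestrict U) := fun c =>
    have hc := h1V (Submodule.algebraMap_mem c)
    ⟨⟨⟨_, hVW hc⟩, hc⟩, hev _ c rfl⟩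
  have h := LinearMap.finrank_range_add_finrank_ker (V := U) (ev.domRestrict U)
  rw [LinearMap.range_eq_top.2 hsurj, finrank_top, finrank_self, LinearMap.ker_domRestrict,
    ← Submodule.finrank_map_subtype_eq, Submodule.map_comap_subtype,
    (Submodule.comapSubtypeEquivOfLe hVW).finrank_eq] at h
  rw [inf_comm]; omega

end Evaluation

section RiemannRoch

variable {k K A : Type} [Field k] [Field K] [Algebra k K] {L : (A →₀ ℤ) → Submodule k K}

theorem L_inf_le (dv : Kˣ → (A →₀ ℤ))
    (hL : ∀ (D : A →₀ ℤ) (f : K), f ∈ L D ↔ f = 0 ∨ ∃ u : Kˣ, (u : K) = f ∧ 0 ≤ dv u + D)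
    (D D' : A →₀ ℤ) : L D ⊓ L D' ≤ L (D ⊓ D') := by
  rintro f ⟨hf, hf'⟩
  rcases (hL D f).1 hf with rfl | ⟨u, rfl, hu⟩
  · exact zero_mem _
  rcases (hL D' u).1 hf' with hu0 | ⟨u', hu', hu'D⟩
  · exact absurd hu0 u.ne_zero
  rw [Units.ext hu'] at hu'D
  refine (hL _ u).2 <| .inr ⟨u, rfl, fun a => ?_⟩
  have h := hu a
  have h' := hu'D a
  simp only [Finsupp.coe_zero, Pi.zero_apply, Finsupp.coe_add, Pi.add_apply,
    Finsupp.inf_apply] at h h' ⊢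
  omega

theorem one_le_L (hconst : ∀ c : k, algebraMap k K c ∈ L 0)
    (hmono : ∀ D D' : A →₀ ℤ, D ≤ D' → L D ≤ L D') {D : A →₀ ℤ} (hD : 0 ≤ D) : 1 ≤ L D := by
  intro f hf
  obtain ⟨c, rfl⟩ := Submodule.mem_one.1 hf
  exact hmono 0 D hD (hconst c)

theorem finrank_L_setDiv_of_nonempty
    (hRR : ∀ D : A →₀ ℤ, 0 ≤ D → D ≠ 0 → finrank k (L D) = (D.sum fun _ n => n).toNat)
    {Z : Finset A} (hZ : Z.Nonempty) : finrank k (L (setDiv Z)) = #Z := by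
  obtain ⟨a, ha⟩ := hZ
  have hZ0 : setDiv Z ≠ 0 := fun h => by simpa [setDiv_apply, ha] using DFunLike.congr_fun h a
  rw [hRR _ (setDiv_nonneg Z) hZ0, sum_setDiv, Int.toNat_natCast]

theorem L_setDiv_singleton
    (hRR : ∀ D : A →₀ ℤ, 0 ≤ D → D ≠ 0 → finrank k (L D) = (D.sum fun _ n => n).toNat)
    (hconst : ∀ c : k, algebraMap k K c ∈ L 0)
    (hmono : ∀ D D' : A →₀ ℤ, D ≤ D' → L D ≤ L D') (p : A) : L (setDiv {p}) = 1 := by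
  have hrank : finrank k (L (setDiv {p})) = 1 := by
    simpa using finrank_L_setDiv_of_nonempty hRR (singleton_nonempty p)
  have : FiniteDimensional k (L (setDiv {p})) := Module.finite_of_finrank_eq_succ hrank
  exact (Submodule.eq_of_le_of_finrank_eq (one_le_L hconst hmono (setDiv_nonneg _))
    (by rw [hrank, Submodule.finrank_one])).symm

theorem finrank_L_setDiv [Nonempty A]
    (hRR : ∀ D : A →₀ ℤ, 0 ≤ D → D ≠ 0 → finrank k (L D) = (D.sum fun _ n => n).toNat)
    (hconst : ∀ c : k, algebraMap k K c ∈ L 0)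
    (hmono : ∀ D D' : A →₀ ℤ, D ≤ D' → L D ≤ L D') (Z : Finset A) :
    finrank k (L (setDiv Z)) = max #Z 1 := by
  -- `L 0` is the line of constants, whence the `max`.
  rcases Z.eq_empty_or_nonempty with rfl | hZ
  · obtain ⟨p⟩ := ‹Nonempty A›
    have hL0 : L 0 = 1 := le_antisymm
      ((hmono _ _ (setDiv_nonneg {p})).trans (L_setDiv_singleton hRR hconst hmono p).le)
      (one_le_L hconst hmono le_rfl)
    rw [setDiv_empty, hL0, Submodule.finrank_one, card_empty, max_eq_right zero_le_one]
  · rw [finrank_L_setDiv_of_nonempty hRR hZ, max_eq_left hZ.card_pos]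

theorem finiteDimensional_L_setDiv [Nonempty A]
    (hRR : ∀ D : A →₀ ℤ, 0 ≤ D → D ≠ 0 → finrank k (L D) = (D.sum fun _ n => n).toNat)
    (hconst : ∀ c : k, algebraMap k K c ∈ L 0)
    (hmono : ∀ D D' : A →₀ ℤ, D ≤ D' → L D ≤ L D') (Z : Finset A) :
    FiniteDimensional k (L (setDiv Z)) :=
  Module.finite_of_finrank_pos (by rw [finrank_L_setDiv hRR hconst hmono]; omega)

theorem finrank_ker_inf_comap_L_setDiv [Nonempty A]
    (hRR : ∀ D : A →₀ ℤ, 0 ≤ D → D ≠ 0 → finrank k (L D) = (D.sum fun _ n => n).toNat)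
    (hconst : ∀ c : k, algebraMap k K c ∈ L 0)
    (hmono : ∀ D D' : A →₀ ℤ, D ≤ D' → L D ≤ L D') {X Z : Finset A} (hZX : Z ⊆ X)
    (ev : L (setDiv X) →ₗ[k] k)
    (hev : ∀ (f : L (setDiv X)) (c : k), (f : K) = algebraMap k K c → ev f = c) :
    finrank k ↥(LinearMap.ker ev ⊓ (L (setDiv Z)).comap (L (setDiv X)).subtype) = #Z - 1 := by
  have := finiteDimensional_L_setDiv hRR hconst hmono X
  have h := finrank_ker_inf_comap_add_one ev hev (one_le_L hconst hmono (setDiv_nonneg Z))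
    (hmono _ _ (setDiv_mono hZX))
  rw [finrank_L_setDiv hRR hconst hmono] at h
  omega

theorem iSupIndep_ker_inf_comap_L {ι : Type*} (dv : Kˣ → (A →₀ ℤ))
    (hL : ∀ (D : A →₀ ℤ) (f : K), f ∈ L D ↔ f = 0 ∨ ∃ u : Kˣ, (u : K) = f ∧ 0 ≤ dv u + D)
    (hRR : ∀ D : A →₀ ℤ, 0 ≤ D → D ≠ 0 → finrank k (L D) = (D.sum fun _ n => n).toNat)
    (hconst : ∀ c : k, algebraMap k K c ∈ L 0)
    (hmono : ∀ D D' : A →₀ ℤ, D ≤ D' → L D ≤ L D')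
    {W : Submodule k K} (ev : W →ₗ[k] k)
    (hev : ∀ (f : W) (c : k), (f : K) = algebraMap k K c → ev f = c)
    (P : Finset ι) (G : ι → Finset A) (p : A)
    (hpair : (P : Set ι).Pairwise fun r s => G r ∩ G s ⊆ {p}) :
    iSupIndep fun r : P => LinearMap.ker ev ⊓ (L (setDiv (G r))).comap W.subtype := by
  intro i
  set Y := (P.erase i).biUnion G
  have hcap : G i ∩ Y ⊆ {p} := fun a ha => by
    obtain ⟨j, hj, haj⟩ := mem_biUnion.1 (mem_inter.1 ha).2
    exact hpair i.2 (mem_of_mem_erase hj) (ne_of_mem_erase hj).symm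
      (mem_inter.2 ⟨(mem_inter.1 ha).1, haj⟩)
  have hsup : ⨆ (j) (_ : j ≠ i), LinearMap.ker ev ⊓ (L (setDiv (G j))).comap W.subtype ≤
      (L (setDiv Y)).comap W.subtype :=
    iSup₂_le fun j hj => inf_le_right.trans <| Submodule.comap_mono <| hmono _ _ <|
      setDiv_mono <| subset_biUnion_of_mem G <| mem_erase.2 ⟨Subtype.coe_injective.ne hj, j.2⟩
  have hinter : L (setDiv (G i)) ⊓ L (setDiv Y) ≤ 1 :=
    calc _ ≤ L (setDiv (G i ∩ Y)) := by rw [setDiv_inter]; exact L_inf_le dv hL _ _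
      _ ≤ L (setDiv {p}) := hmono _ _ (setDiv_mono hcap)
      _ = 1 := L_setDiv_singleton hRR hconst hmono p
  rw [disjoint_iff, eq_bot_iff, ← ker_inf_comap_one_eq_bot ev hev]
  calc _ ≤ LinearMap.ker ev ⊓ (L (setDiv (G i))).comap W.subtype ⊓
        (L (setDiv Y)).comap W.subtype := inf_le_inf_left _ hsup
    _ = LinearMap.ker ev ⊓ (L (setDiv (G i)) ⊓ L (setDiv Y)).comap W.subtype := by
        rw [inf_assoc, Submodule.comap_inf]
    _ ≤ _ := inf_le_inf_left _ (Submodule.comap_mono hinter)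

end RiemannRoch

theorem stmt15_general {k K A : Type} [Field k] [Field K] [Algebra k K]
    [AddCommGroup A]
    (F : AddMonoid.End A)
    (dv : Kˣ → (A →₀ ℤ))
    (L : (A →₀ ℤ) → Submodule k K)
    (hL : ∀ (D : A →₀ ℤ) (f : K),
      f ∈ L D ↔ f = 0 ∨ ∃ u : Kˣ, (u : K) = f ∧ 0 ≤ dv u + D)
    (hRR : ∀ D : A →₀ ℤ, 0 ≤ D → D ≠ 0 →
      Module.finrank k (L D) = (D.sum fun _ n => n).toNat)
    (hconst : ∀ c : k, algebraMap k K c ∈ L 0)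
    (hmono : ∀ D D' : A →₀ ℤ, D ≤ D' → L D ≤ L D')
    (N : ℕ)
    (G : ℕ → Finset A)
    (hG : ∀ r, (G r : Set A) =
      (AddMonoidHom.ker ((∑ i ∈ Finset.range r, F ^ i : AddMonoid.End A) : A →+ A) :
        Set A))
    (α : ℂ)
    (hcardG : ∀ r ∈ N.primeFactors, ((G r).card : ℂ) =
      (∑ i ∈ Finset.range r, α ^ i) * (∑ i ∈ Finset.range r, ((starRingEnd ℂ) α) ^ i))
    (ev : (L (setDiv (N.primeFactors.biUnion G))) →ₗ[k] k)
    (hev : ∀ (f : L (setDiv (N.primeFactors.biUnion G))) (c : k),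
      (f : K) = algebraMap k K c → ev f = c) :
    iSupIndep (fun r : N.primeFactors =>
      LinearMap.ker ev ⊓
        Submodule.comap (L (setDiv (N.primeFactors.biUnion G))).subtype
          (L (setDiv (G (r : ℕ))))) ∧
    (⨆ r : N.primeFactors,
      LinearMap.ker ev ⊓
        Submodule.comap (L (setDiv (N.primeFactors.biUnion G))).subtype
          (L (setDiv (G (r : ℕ))))) = LinearMap.ker ev ∧
    (Module.finrank k (LinearMap.ker ev) : ℂ) =
      ∑ r ∈ N.primeFactors,
        ((∑ i ∈ Finset.range r, α ^ i) *
            (∑ i ∈ Finset.range r, ((starRingEnd ℂ) α) ^ i) - 1) := by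
  have hmemG : ∀ r x, x ∈ G r ↔ (∑ i ∈ range r, F ^ i) x = 0 := fun r x => by
    rw [← mem_coe, hG r]; rfl
  have h0G : ∀ r, (0 : A) ∈ G r := fun r => (hmemG r 0).2 (map_zero _)
  have hpair : (N.primeFactors : Set ℕ).Pairwise fun r s => G r ∩ G s ⊆ {0} :=
    fun r hr s hs hrs x hx => mem_singleton.2 <| F.eq_zero_of_geom_sum_apply_eq_zero_of_coprime
      ((Nat.coprime_primes (Nat.prime_of_mem_primeFactors hr)
        (Nat.prime_of_mem_primeFactors hs)).2 hrs)
      ((hmemG r x).1 (mem_inter.1 hx).1) ((hmemG s x).1 (mem_inter.1 hx).2)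
  have hrank := fun Z (hZ : Z ⊆ N.primeFactors.biUnion G) =>
    finrank_ker_inf_comap_L_setDiv hRR hconst hmono hZ ev hev
  have hrankker : finrank k (LinearMap.ker ev) = ∑ r ∈ N.primeFactors, (#(G r) - 1) := by
    have h := hrank _ subset_rfl
    rwa [Submodule.comap_subtype_self, inf_top_eq,
      card_biUnion_sub_one N.primeFactors G 0 (fun r _ => h0G r) hpair] at h
  have := finiteDimensional_L_setDiv hRR hconst hmono (N.primeFactors.biUnion G)
  have hindep := iSupIndep_ker_inf_comap_L dv hL hRR hconst hmono ev hev N.primeFactors G 0 hpair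
  refine ⟨hindep, ?_, ?_⟩
  · refine Submodule.eq_of_le_of_finrank_eq (iSup_le fun _ => inf_le_left) ?_
    rw [hindep.finrank_iSup, hrankker, ← sum_coe_sort N.primeFactors]
    exact sum_congr rfl fun r _ => hrank _ (subset_biUnion_of_mem G r.2)
  · rw [hrankker, Nat.cast_sum]
    refine sum_congr rfl fun r hr => ?_
    rw [Nat.cast_sub (card_pos.2 ⟨0, h0G r⟩), Nat.cast_one, hcardG r hr]

/-- Model of an elliptic curve `E` over a finite field `k`: the abelian
group `A = E(k̄)` of points carries the `q`-power Frobenius `F`, `K` is the function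
field, `dv` the principal-divisor map and `L` the Riemann–Roch spaces (with
`dim L(D) = deg D` for `D ≥ 0`, `D ≠ 0`, and constants the only regular functions).
Let `N` be a positive square-free integer with prime divisors `P(N) = N.primeFactors`,
`G_r = ker τ_{r/1}` (given as finite sets `G r`), `X_N = ∪_{r∈P(N)} G_r`,
`D_N = (X_N)`, `D_r = (G_r)`, and take the base point `P = 0 ∈ X_N`; `ev` is evaluation
at `0` on `L(D_N)` and `L_0(D) = {f ∈ L(D) : f(0) = 0}` is its kernel intersected with
`L(D)`.  Let `α` be the Frobenius eigenvalue, so `|G_r| = |(α)_r|²`.  Then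
`L_0(D_N) = ⊕_{r ∈ P(N)} L_0(D_r)` (an internal direct sum: the family is independent
and its sup is `L_0(D_N)`), and
`dim L_0(D_N) = Σ_{r∈P(N)} (|(α)_r|² - 1)`. -/
theorem stmt15 {k K A : Type} [Field k] [Fintype k] [Field K] [Algebra k K]
    [AddCommGroup A]
    (F : AddMonoid.End A)
    (dv : Kˣ → (A →₀ ℤ))
    (L : (A →₀ ℤ) → Submodule k K)
    (hL : ∀ (D : A →₀ ℤ) (f : K),
      f ∈ L D ↔ f = 0 ∨ ∃ u : Kˣ, (u : K) = f ∧ 0 ≤ dv u + D)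
    (hRR : ∀ D : A →₀ ℤ, 0 ≤ D → D ≠ 0 →
      Module.finrank k (L D) = (D.sum fun _ n => n).toNat)
    (hL0 : ∀ f ∈ L 0, ∃ c : k, algebraMap k K c = f)
    (hconst : ∀ c : k, algebraMap k K c ∈ L 0)
    (hmono : ∀ D D' : A →₀ ℤ, D ≤ D' → L D ≤ L D')
    (N : ℕ) (hN0 : 0 < N) (hN : Squarefree N)
    (G : ℕ → Finset A)
    (hG : ∀ r, (G r : Set A) =
      (AddMonoidHom.ker ((∑ i ∈ Finset.range r, F ^ i : AddMonoid.End A) : A →+ A) :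
        Set A))
    (α : ℂ)
    (hcardG : ∀ r ∈ N.primeFactors, ((G r).card : ℂ) =
      (∑ i ∈ Finset.range r, α ^ i) * (∑ i ∈ Finset.range r, ((starRingEnd ℂ) α) ^ i))
    (ev : (L (setDiv (N.primeFactors.biUnion G))) →ₗ[k] k)
    (hev : ∀ (f : L (setDiv (N.primeFactors.biUnion G))) (c : k),
      (f : K) = algebraMap k K c → ev f = c) :
    iSupIndep (fun r : N.primeFactors =>
      LinearMap.ker ev ⊓
        Submodule.comap (L (setDiv (N.primeFactors.biUnion G))).subtype
          (L (setDiv (G (r : ℕ))))) ∧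
    (⨆ r : N.primeFactors,
      LinearMap.ker ev ⊓
        Submodule.comap (L (setDiv (N.primeFactors.biUnion G))).subtype
          (L (setDiv (G (r : ℕ))))) = LinearMap.ker ev ∧
    (Module.finrank k (LinearMap.ker ev) : ℂ) =
      ∑ r ∈ N.primeFactors,
        ((∑ i ∈ Finset.range r, α ^ i) *
            (∑ i ∈ Finset.range r, ((starRingEnd ℂ) α) ^ i) - 1) :=
  stmt15_general F dv L hL hRR hconst hmono N G hG α hcardG ev hev
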